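/- Let 𝒜 be a separated integral deformation of the braid arrangement on {1,…,n} satisfying the weak triangle inequality, let w be a valid m-acyclic weight function of 𝒜, let σ be its order of gains, and let g be its gain function. Then for each i with 1 < i ≤ n there is a directed path from σ(1) to σ(i) along present edges such that every edge weight on the path is nonnegative and the total weight of the path equals g(σ(i)). -/

import Mathlib

/-- Cyclically consecutive pairs along a list of vertices. -/
def cpairs {n : ℕ} (c : List (Fin n)) : List (Fin n × Fin n) := c.zip (c.rotate 1)

/-- `c` is a directed cycle of the weighted digraph `w`, an edge `u → v`
being present when `w u v ≠ ⊥` (`⊥` stands for `-∞`). -/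
def IsCycle {n : ℕ} (w : Fin n → Fin n → WithBot ℤ) (c : List (Fin n)) : Prop :=
  2 ≤ c.length ∧ c.Nodup ∧ ∀ p ∈ cpairs c, w p.1 p.2 ≠ ⊥

/-- Total weight of the edges of a cycle. -/
def cycWeight {n : ℕ} (w : Fin n → Fin n → WithBot ℤ) (c : List (Fin n)) : WithBot ℤ :=
  ((cpairs c).map fun p => w p.1 p.2).sum

/-- An `m`-ascending cycle: a directed cycle of nonnegative total weight. -/
def MAscending {n : ℕ} (w : Fin n → Fin n → WithBot ℤ) (c : List (Fin n)) : Prop :=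
  IsCycle w c ∧ 0 ≤ cycWeight w c

/-- A weighted digraph is `m`-acyclic if it has no `m`-ascending cycle. -/
def MAcyclic {n : ℕ} (w : Fin n → Fin n → WithBot ℤ) : Prop :=
  ∀ c : List (Fin n), ¬ MAscending w c

/-- `w` is a valid weight function of the contiguous integral deformation of
the braid arrangement determined by the bounds `a = α` and `b = β`:
`w i j ∈ {α i j, …, β i j} ∪ {⊥}`, `w i j = ⊥ ↔ w j i = β j i`, and
`w j i = -1 - w i j` whenever both values are finite.  There are no loops. -/
def ValidW {n : ℕ} (a b : Fin n → Fin n → ℤ) (w : Fin n → Fin n → WithBot ℤ) : Prop :=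
  (∀ i, w i i = ⊥) ∧
  ∀ i j : Fin n, i ≠ j →
    (w i j ≠ ⊥ → (a i j : WithBot ℤ) ≤ w i j ∧ w i j ≤ (b i j : WithBot ℤ)) ∧
    (w i j = ⊥ ↔ w j i = (b j i : WithBot ℤ)) ∧
    (∀ x y : ℤ, w i j = (x : WithBot ℤ) → w j i = (y : WithBot ℤ) → y = -1 - x)

/-- `w` is a valid weight function of the integral deformation of the braid
arrangement assigning the finite set `A i j` of integers to each pair `i < j`:
either `w i j = ⊥` and `w j i = -min (A i j)`, or `w i j = max (A i j)` and
`w j i = ⊥`, or `w i j = c` and `w j i = -c'` for two consecutive elements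
`c < c'` of `A i j`. -/
def ValidA {n : ℕ} (A : Fin n → Fin n → Finset ℤ) (w : Fin n → Fin n → WithBot ℤ) : Prop :=
  (∀ i, w i i = ⊥) ∧
  ∀ i j : Fin n, i < j →
    ((w i j = ⊥ ∧ ∃ c : ℤ, c ∈ A i j ∧ (∀ d ∈ A i j, c ≤ d) ∧ w j i = ((-c : ℤ) : WithBot ℤ))
     ∨ (w j i = ⊥ ∧ ∃ c : ℤ, c ∈ A i j ∧ (∀ d ∈ A i j, d ≤ c) ∧ w i j = ((c : ℤ) : WithBot ℤ))
     ∨ (∃ c c' : ℤ, c ∈ A i j ∧ c' ∈ A i j ∧ c < c' ∧ (∀ d ∈ A i j, ¬ (c < d ∧ d < c')) ∧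
         w i j = ((c : ℤ) : WithBot ℤ) ∧ w j i = ((-c' : ℤ) : WithBot ℤ)))

/-- The deformation given by `A` satisfies the weak triangle inequality. -/
def WeakTriangleA {n : ℕ} (A : Fin n → Fin n → Finset ℤ) : Prop :=
  ∀ w : Fin n → Fin n → WithBot ℤ, ValidA A w → MAcyclic w →
    ∀ i j k : Fin n, i ≠ j → j ≠ k → i ≠ k →
      0 ≤ w i j → 0 ≤ w j k → w i k ≤ w i j + w j k + 1

/-- Total weight of the edges of a (directed) path, given as its list of
vertices. -/
def pathWeight {n : ℕ} (w : Fin n → Fin n → WithBot ℤ) (p : List (Fin n)) : WithBot ℤ :=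
  ((p.zip p.tail).map fun q => w q.1 q.2).sum


/-!
Nonnegative edges go forward in the order of gains, since a nonnegative 2-cycle would be
ascending. Let `Q` be a nonnegative path from `σ 0` to `u` and `u → v` an edge pointing
backwards. Split `Q = T ++ D` where `y`, the last vertex of `T`, is the last vertex of `Q` not
after `v`, and `d` is the first vertex of `D`. Closing `D` up by `v` gives a cycle, so
`w v d + pathWeight D + w u v < 0`. Hence `T` (if `y = v`) or `T ++ [v]` (if `y` precedes `v`,
by the weak triangle inequality `w y d ≤ w y v + w v d + 1`) is a nonnegative path to `v` at
least as heavy as `Q ++ [v]`. Treating the edges of a maximum-weight path one at a time turns it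
into a nonnegative path of the same weight.
-/

def WeakTriangle {n : ℕ} (w : Fin n → Fin n → WithBot ℤ) : Prop :=
  ∀ i j k : Fin n, i ≠ j → j ≠ k → i ≠ k → 0 ≤ w i j → 0 ≤ w j k →
    w i k ≤ w i j + w j k + 1

theorem List.IsChain.rel_of_mem_zip_tail {α : Type*} {R : α → α → Prop} :
    ∀ {l : List α}, l.IsChain R → ∀ {a b : α}, (a, b) ∈ l.zip l.tail → R a b
  | [], _, _, _, hm | [_], _, _, _, hm => by simp at hm
  | a :: b :: t, h, _, _, hm => by
    rw [List.isChain_cons_cons] at h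
    simp only [List.tail_cons, List.zip_cons_cons, List.mem_cons, Prod.mk.injEq] at hm
    rcases hm with ⟨rfl, rfl⟩ | hm
    · exact h.1
    · exact h.2.rel_of_mem_zip_tail hm

theorem List.zip_cons_append_singleton {α : Type*} {b u : α} :
    ∀ {a : α} {l : List α}, (a :: l).getLast? = some u →
      (a :: l).zip (l ++ [b]) = (a :: l).zip l ++ [(u, b)]
  | a, [], hu => by simp_all
  | a, c :: l, hu => by
    rw [List.getLast?_cons_cons] at hu
    simp only [List.cons_append, List.zip_cons_cons, List.zip_cons_append_singleton hu]

theorem List.exists_eq_append_of_head_of_getLast {α : Type*} (p : α → Prop) :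
    ∀ {a b : α} {l : List α}, (a :: l).getLast? = some b → p a → ¬ p b →
      ∃ T D y d, a :: l = T ++ D ∧ T.getLast? = some y ∧ D.head? = some d ∧ p y ∧ ¬ p d
  | a, b, [], hb, ha, hnb => by simp_all
  | a, b, c :: l, hb, ha, hnb => by
    by_cases hc : p c
    · rw [List.getLast?_cons_cons] at hb
      obtain ⟨T, D, y, d, hTD, hy, hd, hpy, hpd⟩ :=
        List.exists_eq_append_of_head_of_getLast p hb hc hnb
      refine ⟨a :: T, D, y, d, by rw [hTD, List.cons_append], ?_, hd, hpy, hpd⟩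
      simp [List.getLast?_cons, hy]
    · exact ⟨[a], c :: l, a, c, rfl, rfl, rfl, ha, hc⟩

theorem WithBot.add_one_le_zero_of_neg {x : WithBot ℤ} (h : x < 0) : x + 1 ≤ 0 := by
  induction x with
  | bot => simp
  | coe x =>
    have hx : x < 0 := mod_cast h
    exact_mod_cast (show x + 1 ≤ 0 by omega)

section Paths

variable {n : ℕ} {w : Fin n → Fin n → WithBot ℤ}

theorem pathWeight_cons_of_head {a d : Fin n} {l : List (Fin n)} (hd : l.head? = some d) :
    pathWeight w (a :: l) = w a d + pathWeight w l := by
  obtain ⟨t, rfl⟩ := List.head?_eq_some_iff.mp hd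
  simp [pathWeight]

theorem pathWeight_append {l₁ l₂ : List (Fin n)} {y d : Fin n} (hy : l₁.getLast? = some y)
    (hd : l₂.head? = some d) :
    pathWeight w (l₁ ++ l₂) = pathWeight w l₁ + w y d + pathWeight w l₂ := by
  induction l₁ with
  | nil => simp at hy
  | cons a t ih =>
    rcases t with _ | ⟨b, t⟩
    · obtain rfl : a = y := by simpa using hy
      rw [List.singleton_append, pathWeight_cons_of_head hd]
      simp [pathWeight]
    · rw [List.getLast?_cons_cons] at hy
      rw [List.cons_append, pathWeight_cons_of_head (d := b) (by simp), ih hy,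
        pathWeight_cons_of_head (l := b :: t) rfl]
      simp only [add_assoc]

theorem pathWeight_concat {l : List (Fin n)} {u : Fin n} (v : Fin n) (hu : l.getLast? = some u) :
    pathWeight w (l ++ [v]) = pathWeight w l + w u v := by
  rw [pathWeight_append hu List.head?_singleton]
  simp [pathWeight]

theorem cycWeight_cons {a u : Fin n} {l : List (Fin n)} (hu : (a :: l).getLast? = some u) :
    cycWeight w (a :: l) = pathWeight w (a :: l) + w u a := by
  simp [cycWeight, cpairs, List.rotate_cons_succ, List.zip_cons_append_singleton hu, pathWeight]

theorem MAcyclic.pathWeight_add_lt_zero (hac : MAcyclic w) {a u : Fin n} {l : List (Fin n)}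
    (hl : l ≠ []) (hnd : (a :: l).Nodup) (hch : (a :: l).IsChain fun x y => w x y ≠ ⊥)
    (hu : (a :: l).getLast? = some u) (hua : w u a ≠ ⊥) :
    pathWeight w (a :: l) + w u a < 0 := by
  rw [← cycWeight_cons hu]
  refine lt_of_not_ge fun h => hac (a :: l) ⟨⟨?_, hnd, fun p hp => ?_⟩, h⟩
  · simpa [Nat.one_le_iff_ne_zero] using hl
  · simp only [cpairs, List.rotate_cons_succ, List.rotate_zero,
      List.zip_cons_append_singleton hu, List.mem_append, List.mem_singleton] at hp
    rcases hp with hp | rfl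
    · exact hch.rel_of_mem_zip_tail hp
    · exact hua

end Paths

section GainOrder

variable {n : ℕ} {w : Fin n → Fin n → WithBot ℤ} {σ : Equiv.Perm (Fin n)}

theorem ne_bot_of_nonneg {x : WithBot ℤ} (h : 0 ≤ x) : x ≠ ⊥ :=
  ne_bot_of_le_ne_bot WithBot.zero_ne_bot h

theorem nonneg_of_symm_lt (hσ : ∀ i j : Fin n, i < j → 0 ≤ w (σ i) (σ j)) {x y : Fin n}
    (h : σ.symm x < σ.symm y) : 0 ≤ w x y := by
  simpa using hσ _ _ h

theorem symm_lt_of_nonneg (hloop : ∀ i, w i i = ⊥) (hac : MAcyclic w)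
    (hσ : ∀ i j : Fin n, i < j → 0 ≤ w (σ i) (σ j)) {x y : Fin n} (h : 0 ≤ w x y) :
    σ.symm x < σ.symm y := by
  have hxy : x ≠ y := by
    rintro rfl
    simp [hloop] at h
  refine lt_of_not_ge fun hyx => ?_
  have hyx' : 0 ≤ w y x := nonneg_of_symm_lt hσ (hyx.lt_of_ne (σ.symm.injective.ne hxy.symm))
  have hcyc := hac.pathWeight_add_lt_zero (a := x) (l := [y]) (u := y) (by simp)
    (by simpa using hxy) (by simpa using ne_bot_of_nonneg h) rfl (ne_bot_of_nonneg hyx')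
  rw [show pathWeight w [x, y] = w x y by simp [pathWeight]] at hcyc
  exact hcyc.not_ge (add_nonneg h hyx')

theorem nodup_of_isChain_nonneg (hloop : ∀ i, w i i = ⊥) (hac : MAcyclic w)
    (hσ : ∀ i j : Fin n, i < j → 0 ≤ w (σ i) (σ j)) {l : List (Fin n)}
    (hl : l.IsChain fun x y => 0 ≤ w x y) : l.Nodup := by
  have hmono : (l.map σ.symm).IsChain (· < ·) :=
    (List.isChain_map _).mpr (hl.imp fun _ _ => symm_lt_of_nonneg hloop hac hσ)
  exact (List.isChain_iff_pairwise.mp hmono).nodup.of_map _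

theorem exists_nonneg_path_of_back_edge (hloop : ∀ i, w i i = ⊥) (hac : MAcyclic w)
    (htri : WeakTriangle w) (hσ : ∀ i j : Fin n, i < j → 0 ≤ w (σ i) (σ j))
    {T D : List (Fin n)} {s y d u v : Fin n}
    (hT : T.IsChain fun x y => 0 ≤ w x y) (hs : T.head? = some s) (hy : T.getLast? = some y)
    (hD : D.IsChain fun x y => 0 ≤ w x y) (hd : D.head? = some d) (hu : D.getLast? = some u)
    (hyv : σ.symm y ≤ σ.symm v) (hvd : σ.symm v < σ.symm d)
    (huv : w u v ≠ ⊥) :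
    ∃ Q, (Q.IsChain fun x y => 0 ≤ w x y) ∧ Q.head? = some s ∧ Q.getLast? = some v ∧
      pathWeight w (T ++ D) + w u v ≤ pathWeight w Q := by
  have hvD : (v :: D).IsChain fun x y => 0 ≤ w x y :=
    hD.cons fun d' hd' => by
      obtain rfl : d = d' := by simpa [hd] using hd'
      exact nonneg_of_symm_lt hσ hvd
  have hDne : D ≠ [] := by
    rintro rfl
    simp at hd
  have hcyc : w v d + pathWeight w D + w u v < 0 := by
    have := hac.pathWeight_add_lt_zero hDne (nodup_of_isChain_nonneg hloop hac hσ hvD)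
      (hvD.imp fun _ _ => ne_bot_of_nonneg) (by simp [List.getLast?_cons, hu]) huv
    rwa [pathWeight_cons_of_head hd] at this
  rw [pathWeight_append hy hd]
  rcases hyv.eq_or_lt with hyv | hyv
  · obtain rfl : y = v := σ.symm.injective hyv
    refine ⟨T, hT, hs, hy, ?_⟩
    calc pathWeight w T + w y d + pathWeight w D + w u y
        = pathWeight w T + (w y d + pathWeight w D + w u y) := by simp only [add_assoc]
      _ ≤ pathWeight w T := add_le_of_nonpos_right hcyc.le
  · have hyv' := nonneg_of_symm_lt hσ hyv
    have htri' := htri y v d (ne_of_apply_ne σ.symm hyv.ne) (ne_of_apply_ne σ.symm hvd.ne)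
      (ne_of_apply_ne σ.symm (hyv.trans hvd).ne) hyv' (nonneg_of_symm_lt hσ hvd)
    refine ⟨T ++ [v], ?_, ?_, List.getLast?_concat, ?_⟩
    · exact List.isChain_append.mpr ⟨hT, List.isChain_singleton v, by simp_all⟩
    · simp [List.head?_append, hs]
    rw [pathWeight_concat v hy]
    calc pathWeight w T + w y d + pathWeight w D + w u v
        ≤ pathWeight w T + (w y v + w v d + 1) + pathWeight w D + w u v := by gcongr
      _ = pathWeight w T + w y v + (w v d + pathWeight w D + w u v + 1) := by ac_rfl
      _ ≤ pathWeight w T + w y v := add_le_of_nonpos_right (WithBot.add_one_le_zero_of_neg hcyc)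

theorem exists_nonneg_path_of_edge (hloop : ∀ i, w i i = ⊥) (hac : MAcyclic w)
    (htri : WeakTriangle w) (hσ : ∀ i j : Fin n, i < j → 0 ≤ w (σ i) (σ j))
    {Q : List (Fin n)} {s u v : Fin n} (hQ : Q.IsChain fun x y => 0 ≤ w x y)
    (hs : Q.head? = some s) (hu : Q.getLast? = some u) (hsv : σ.symm s ≤ σ.symm v)
    (huv : w u v ≠ ⊥) :
    ∃ Q', (Q'.IsChain fun x y => 0 ≤ w x y) ∧ Q'.head? = some s ∧ Q'.getLast? = some v ∧
      pathWeight w Q + w u v ≤ pathWeight w Q' := by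
  have hne : u ≠ v := by
    rintro rfl
    exact huv (hloop u)
  rcases lt_or_gt_of_ne (σ.symm.injective.ne hne) with hfwd | hback
  · refine ⟨Q ++ [v], ?_, ?_, List.getLast?_concat, (pathWeight_concat v hu).ge⟩
    · exact List.isChain_append.mpr ⟨hQ, List.isChain_singleton v,
        by simpa [hu] using nonneg_of_symm_lt hσ hfwd⟩
    · obtain ⟨t, rfl⟩ := List.head?_eq_some_iff.mp hs
      simp
  · obtain ⟨t, rfl⟩ := List.head?_eq_some_iff.mp hs
    obtain ⟨T, D, y, d, hTD, hy, hd, hyv, hvd⟩ :=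
      List.exists_eq_append_of_head_of_getLast (fun x => σ.symm x ≤ σ.symm v) hu hsv
        hback.not_ge
    rw [hTD] at hQ hu ⊢
    obtain ⟨hT, hD, -⟩ := List.isChain_append.mp hQ
    have hDne : D ≠ [] := by
      rintro rfl
      simp at hd
    have hTs : T.head? = some s := by
      cases T with
      | nil => simp at hy
      | cons t₀ T =>
        simp only [List.cons_append, List.cons.injEq] at hTD
        simp [hTD.1]
    exact exists_nonneg_path_of_back_edge hloop hac htri hσ hT hTs hy hD hd
      (by rwa [List.getLast?_append_of_ne_nil _ hDne] at hu) hyv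
      (not_le.mp hvd) huv

theorem exists_nonneg_path_ge (hn : 0 < n) (hloop : ∀ i, w i i = ⊥) (hac : MAcyclic w)
    (htri : WeakTriangle w) (hσ : ∀ i j : Fin n, i < j → 0 ≤ w (σ i) (σ j))
    {p : List (Fin n)} (hs : p.head? = some (σ ⟨0, hn⟩))
    (hp : p.IsChain fun x y => w x y ≠ ⊥) :
    ∃ q, (q.IsChain fun x y => 0 ≤ w x y) ∧ q.head? = some (σ ⟨0, hn⟩) ∧
      q.getLast? = p.getLast? ∧ pathWeight w p ≤ pathWeight w q := by
  induction p using List.reverseRecOn with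
  | nil => simp at hs
  | append_singleton l v ih =>
    cases hu : l.getLast? with
    | none =>
      obtain rfl : l = [] := List.getLast?_eq_none_iff.mp hu
      exact ⟨[v], List.isChain_singleton v, hs, rfl, le_rfl⟩
    | some u =>
      have hl : l ≠ [] := by
        rintro rfl
        simp at hu
      obtain ⟨hlp, -, huv⟩ := List.isChain_append.mp hp
      obtain ⟨q, hq, hqs, hqu, hle⟩ := ih (by rwa [List.head?_append_of_ne_nil _ hl] at hs) hlp
      obtain ⟨Q, hQ, hQs, hQv, hle'⟩ := exists_nonneg_path_of_edge hloop hac htri hσ hq hqs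
        (hqu.trans hu) (by simp [Fin.le_def]) (huv u hu v rfl)
      refine ⟨Q, hQ, hQs, hQv.trans List.getLast?_concat.symm, ?_⟩
      calc pathWeight w (l ++ [v]) = pathWeight w l + w u v := pathWeight_concat v hu
        _ ≤ pathWeight w q + w u v := by gcongr
        _ ≤ pathWeight w Q := hle'

end GainOrder

theorem stmt13_general (n : ℕ) (hn : 0 < n) (A : Fin n → Fin n → Finset ℤ)
    (hwt : WeakTriangleA A)
    (w : Fin n → Fin n → WithBot ℤ) (hw : ValidA A w) (hac : MAcyclic w)
    (σ : Equiv.Perm (Fin n)) (hσ : ∀ i j : Fin n, i < j → 0 ≤ w (σ i) (σ j))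
    (g : Fin n → WithBot ℤ)
    (hg : ∀ v : Fin n, IsGreatest
      {t : WithBot ℤ | ∃ p : List (Fin n), p.head? = some (σ ⟨0, hn⟩) ∧
        p.getLast? = some v ∧ List.Chain' (fun x y => w x y ≠ ⊥) p ∧ pathWeight w p = t}
      (g v)) :
    ∀ i : Fin n, (⟨0, hn⟩ : Fin n) < i →
      ∃ p : List (Fin n), p.head? = some (σ ⟨0, hn⟩) ∧ p.getLast? = some (σ i) ∧
        List.Chain' (fun x y => (0 : WithBot ℤ) ≤ w x y) p ∧ pathWeight w p = g (σ i) := by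
  intro i _
  obtain ⟨p, hps, hpv, hp, hpg⟩ := (hg (σ i)).1
  obtain ⟨q, hq, hqs, hqv, hle⟩ :=
    exists_nonneg_path_ge hn hw.1 hac (hwt w hw hac) hσ hps hp
  have hqv' : q.getLast? = some (σ i) := hqv.trans hpv
  have hqg : pathWeight w q ≤ g (σ i) :=
    (hg (σ i)).2 ⟨q, hqs, hqv', hq.imp fun _ _ => ne_bot_of_nonneg, rfl⟩
  exact ⟨q, hqs, hqv', hq, hqg.antisymm (hpg ▸ hle)⟩

theorem stmt13 (n : ℕ) (hn : 0 < n) (A : Fin n → Fin n → Finset ℤ)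
    (hA : ∀ i j : Fin n, i < j → (A i j).Nonempty)
    (hsep : ∀ i j : Fin n, i < j → (0 : ℤ) ∈ A i j)
    (hwt : WeakTriangleA A)
    (w : Fin n → Fin n → WithBot ℤ) (hw : ValidA A w) (hac : MAcyclic w)
    (σ : Equiv.Perm (Fin n)) (hσ : ∀ i j : Fin n, i < j → 0 ≤ w (σ i) (σ j))
    (g : Fin n → WithBot ℤ)
    (hg : ∀ v : Fin n, IsGreatest
      {t : WithBot ℤ | ∃ p : List (Fin n), p.head? = some (σ ⟨0, hn⟩) ∧
        p.getLast? = some v ∧ List.Chain' (fun x y => w x y ≠ ⊥) p ∧ pathWeight w p = t}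
      (g v)) :
    ∀ i : Fin n, (⟨0, hn⟩ : Fin n) < i →
      ∃ p : List (Fin n), p.head? = some (σ ⟨0, hn⟩) ∧ p.getLast? = some (σ i) ∧
        List.Chain' (fun x y => (0 : WithBot ℤ) ≤ w x y) p ∧ pathWeight w p = g (σ i) :=
  stmt13_general n hn A hwt w hw hac σ hσ g hg
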